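/- Let R be an Erdős sieve over an étale ℚ-algebra K with weak light tails for a Følner sequence (I_N). Suppose that for every index j and every x ∈ R_j one has lim_{L→∞} d̄_I((x + 𝔟_j) ∩ ⋃_{i>L} R_i) = 0. Then R has strong light tails for (I_N). -/

import Mathlib

open Filter Topology MeasureTheory Pointwise symmDiff

noncomputable section

namespace ErdosSieve

variable {O : Type} [CommRing O]

/-- A sieve over (the ring of integers of) an étale `ℚ`-algebra: a sequence of pairwise
coprime invertible (i.e. finite-quotient) ideals `b i` together with, for each `i`, a finite
set `gen i` of representatives, so that the sieved-out set is `R_i = gen i + b i`, which is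
required to be a proper subset of the ring. -/
structure Sieve (O : Type) [CommRing O] : Type where
  b : ℕ → Ideal O
  gen : ℕ → Finset O
  coprime : ∀ i j, i ≠ j → b i ⊔ b j = ⊤
  finQuot : ∀ i, Finite (O ⧸ b i)
  ne_univ : ∀ i, (↑(gen i) : Set O) + (↑(b i) : Set O) ≠ Set.univ

/-- The `i`-th sieved-out set `R_i = gen i + b i`. -/
def Sieve.RSet (S : Sieve O) (i : ℕ) : Set O := (↑(S.gen i) : Set O) + (↑(S.b i) : Set O)

/-- The set `F_R` of `R`-free numbers. -/
def Sieve.FR (S : Sieve O) : Set O := (⋃ i, S.RSet i)ᶜ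

/-- The norm `N(b i)` of the `i`-th ideal. -/
def Sieve.normb (S : Sieve O) (i : ℕ) : ℕ := Nat.card (O ⧸ S.b i)

/-- The number `|R_i|` of residue classes modulo `b i` met by `R_i`. -/
def Sieve.cardR (S : Sieve O) (i : ℕ) : ℕ :=
  Nat.card ((Ideal.Quotient.mk (S.b i)) '' (S.RSet i))

/-- A sieve is Erdős if `∑ |R_i| / N(b_i) < ∞`. -/
def Sieve.IsErdos (S : Sieve O) : Prop :=
  Summable fun i => (S.cardR i : ℝ) / (S.normb i : ℝ)

/-- A Følner sequence: finite nonempty subsets of `O` which are asymptotically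
translation-invariant. -/
def IsFolner (I : ℕ → Set O) : Prop :=
  (∀ N, (I N).Finite) ∧ (∀ N, (I N).Nonempty) ∧
    ∀ x : O, Tendsto
      (fun N => (Nat.card ↥(((x + ·) '' I N) ∆ (I N)) : ℝ) / (Nat.card ↥(I N) : ℝ))
      atTop (𝓝 0)

/-- Upper density along a (Følner) sequence. -/
def upperDensity (I : ℕ → Set O) (A : Set O) : ℝ :=
  limsup (fun N => (Nat.card ↥(A ∩ I N) : ℝ) / (Nat.card ↥(I N) : ℝ)) atTop

/-- `A` has density `d` along the sequence `I`. -/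
def HasDensity (I : ℕ → Set O) (A : Set O) (d : ℝ) : Prop :=
  Tendsto (fun N => (Nat.card ↥(A ∩ I N) : ℝ) / (Nat.card ↥(I N) : ℝ)) atTop (𝓝 d)

/-- `⋃_{i ≥ L} R i`. -/
def unionGe (R : ℕ → Set O) (L : ℕ) : Set O := ⋃ i, ⋃ (_ : L ≤ i), R i

/-- `⋃_{i < L} R i`. -/
def unionLt (R : ℕ → Set O) (L : ℕ) : Set O := ⋃ i, ⋃ (_ : i < L), R i

/-- The weak light tails property for a family of sieved-out sets:
`limsup`-density of `⋃_{i ≥ L} R_i ∖ ⋃_{j < L} R_j` tends to `0` as `L → ∞`. -/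
def WeakLightTailsFam (I : ℕ → Set O) (R : ℕ → Set O) : Prop :=
  Tendsto (fun L => upperDensity I (unionGe R L \ unionLt R L)) atTop (𝓝 0)

/-- The strong light tails property for a family of sieved-out sets. -/
def StrongLightTailsFam (I : ℕ → Set O) (R : ℕ → Set O) : Prop :=
  Tendsto (fun L => upperDensity I (unionGe R L)) atTop (𝓝 0)

/-- A sieve has weak light tails for `I` if it is Erdős and the tail differences have
vanishing upper density. -/
def Sieve.HasWeakLightTails (S : Sieve O) (I : ℕ → Set O) : Prop :=
  S.IsErdos ∧ WeakLightTailsFam I S.RSet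

/-- A sieve has strong light tails for `I` if it is Erdős and the tails have vanishing
upper density. -/
def Sieve.HasStrongLightTails (S : Sieve O) (I : ℕ → Set O) : Prop :=
  S.IsErdos ∧ StrongLightTailsFam I S.RSet

/-- The infinite product `∏_i (1 - |R_i|/N(b_i))`, realized as the infimum of the
(nonincreasing) sequence of partial products, i.e. as its limit. -/
def Sieve.prodDensity (S : Sieve O) : ℝ :=
  ⨅ L : ℕ, ∏ i ∈ Finset.range L, (1 - (S.cardR i : ℝ) / (S.normb i : ℝ))

/-- `A` is an `R`-admissible set: `-A + R_i ≠ O` for all `i`. -/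
def Sieve.Admissible (S : Sieve O) (A : Set O) : Prop :=
  ∀ i, -A + S.RSet i ≠ Set.univ

/-- The number `|-A + R_i|` of residue classes modulo `b i` met by `-A + R_i`. -/
def Sieve.cardShift (S : Sieve O) (A : Set O) (i : ℕ) : ℕ :=
  Nat.card ((Ideal.Quotient.mk (S.b i)) '' (-A + S.RSet i))

/-- The infinite product `∏_i (1 - |-A + R_i|/N(b_i))` (as the infimum of the
partial products). -/
def Sieve.prodDensityShift (S : Sieve O) (A : Set O) : ℝ :=
  ⨅ L : ℕ, ∏ i ∈ Finset.range L, (1 - (S.cardShift A i : ℝ) / (S.normb i : ℝ))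

/-- A subset `Y` of `O` is syndetic if finitely many translates of it cover `O`. -/
def Syndetic (Y : Set O) : Prop := ∃ C : Finset O, Y + (↑C : Set O) = Set.univ

-- Indicator of a subset of `O`, i.e. a point of the shift space `{0,1}^O`.
open Classical in
def chiSet (A : Set O) : O → Bool := fun x => if x ∈ A then true else false

/-- The shift action `S_a(A) = A - a` on `{0,1}^O`: `χ_{A - a}(x) = χ_A (x + a)`. -/
def shiftB (a : O) (f : O → Bool) : O → Bool := fun x => f (x + a)

/-- The odometer group `G_R = ∏ i, O ⧸ b i`. -/
abbrev Sieve.GR (S : Sieve O) : Type := ∀ i : ℕ, O ⧸ S.b i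

-- The map `φ_R : G_R → {0,1}^O`: `a ∈ φ_R(g)` iff `a + g i` avoids (the image of) `R_i`
-- modulo `b i` for every `i`.
open Classical in
def Sieve.phiB (S : Sieve O) (g : S.GR) : O → Bool := fun a =>
  if (∀ i, (Ideal.Quotient.mk (S.b i) a + g i) ∉ (Ideal.Quotient.mk (S.b i)) '' (S.RSet i))
  then true else false

/-- The Mirsky measure `ν_R` on `{0,1}^O`: the pushforward under `φ_R` of the Haar
probability measure of the compact group `G_R` (each factor being finite and discrete,
and the Haar measure being normalized so that the whole group has measure `1`). -/
def Sieve.mirsky (S : Sieve O) : Measure (O → Bool) := by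
  letI : ∀ i, TopologicalSpace (O ⧸ S.b i) := fun _ => ⊥
  haveI : ∀ i, DiscreteTopology (O ⧸ S.b i) := fun _ => ⟨rfl⟩
  haveI : ∀ i, Finite (O ⧸ S.b i) := S.finQuot
  haveI : ∀ i, IsTopologicalAddGroup (O ⧸ S.b i) := fun i => { }
  letI : MeasurableSpace S.GR := borel _
  haveI : BorelSpace S.GR := ⟨rfl⟩
  exact Measure.map S.phiB (Measure.addHaarMeasure (G := S.GR) ⊤)

/-- The ring of integers of the étale `ℚ`-algebra `K 0 × ⋯ × K (m-1)`. -/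
abbrev OK {m : ℕ} (K : Fin m → Type) [∀ j, Field (K j)] [∀ j, NumberField (K j)] : Type :=
  ∀ j, NumberField.RingOfIntegers (K j)

variable {m : ℕ} (K : Fin m → Type) [∀ j, Field (K j)] [∀ j, NumberField (K j)]

/-- The "ball" `B_N` in `O_K`: elements all of whose archimedean embeddings have absolute
value at most `N` (the max over embeddings of all the number-field components). -/
def ball (N : ℕ) : Set (OK K) :=
  {x | ∀ j, ∀ φ : K j →+* ℂ,
    ‖φ (algebraMap (NumberField.RingOfIntegers (K j)) (K j) (x j))‖ ≤ N}

/-!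
Split `⋃_{i ≥ L} R_i` along `⋃_{j < L₀} R_j`. The points outside it lie in the weak tail at `L₀`,
which has small upper density once `L₀` is large. The points inside it lie in one of the finitely
many classes `x + b_j` with `j < L₀` and `x ∈ gen j`, and by hypothesis the part of each such class
in the tail at `L` has upper density tending to `0` as `L → ∞`.
-/

section LightTails

variable {α : Type} {I : ℕ → Set α}

lemma card_inter_div_card_mono {A B : Set α} (h : A ⊆ B) (N : ℕ) :
    (Nat.card ↥(A ∩ I N) : ℝ) / Nat.card ↥(I N) ≤ (Nat.card ↥(B ∩ I N) : ℝ) / Nat.card ↥(I N) := by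
  rcases (I N).finite_or_infinite with hfin | hinf
  · gcongr
    simp only [Nat.card_coe_set_eq]
    exact Set.ncard_le_ncard (Set.inter_subset_inter_left _ h) (hfin.subset Set.inter_subset_right)
  · -- `Nat.card` of an infinite type is `0`, so both sides are `_ / 0 = 0`.
    simp [Nat.card_coe_set_eq, hinf.ncard]

lemma card_inter_div_card_le_one (A : Set α) (N : ℕ) :
    (Nat.card ↥(A ∩ I N) : ℝ) / Nat.card ↥(I N) ≤ 1 :=
  (card_inter_div_card_mono (Set.subset_univ A) N).trans <| by
    rw [Set.univ_inter]
    exact div_self_le_one _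

lemma card_inter_div_card_union_le (A B : Set α) (N : ℕ) :
    (Nat.card ↥((A ∪ B) ∩ I N) : ℝ) / Nat.card ↥(I N) ≤
      (Nat.card ↥(A ∩ I N) : ℝ) / Nat.card ↥(I N) +
        (Nat.card ↥(B ∩ I N) : ℝ) / Nat.card ↥(I N) := by
  rw [← add_div]
  gcongr
  simp only [Nat.card_coe_set_eq, Set.union_inter_distrib_right]
  exact_mod_cast Set.ncard_union_le _ _

lemma isBoundedUnder_le_card_inter_div_card (A : Set α) :
    IsBoundedUnder (· ≤ ·) atTop fun N => (Nat.card ↥(A ∩ I N) : ℝ) / Nat.card ↥(I N) :=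
  isBoundedUnder_of ⟨1, card_inter_div_card_le_one A⟩

lemma isBoundedUnder_ge_card_inter_div_card (A : Set α) :
    IsBoundedUnder (· ≥ ·) atTop fun N => (Nat.card ↥(A ∩ I N) : ℝ) / Nat.card ↥(I N) :=
  isBoundedUnder_of ⟨0, fun _ => by positivity⟩

lemma upperDensity_nonneg (A : Set α) : 0 ≤ upperDensity I A :=
  le_limsup_of_frequently_le (.of_forall fun _ => by positivity)
    (isBoundedUnder_le_card_inter_div_card A)

lemma upperDensity_mono {A B : Set α} (h : A ⊆ B) : upperDensity I A ≤ upperDensity I B :=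
  limsup_le_limsup (.of_forall (card_inter_div_card_mono h))
    (isBoundedUnder_ge_card_inter_div_card A).isCoboundedUnder_le
    (isBoundedUnder_le_card_inter_div_card B)

lemma upperDensity_union_le (A B : Set α) :
    upperDensity I (A ∪ B) ≤ upperDensity I A + upperDensity I B :=
  (limsup_le_limsup (.of_forall (card_inter_div_card_union_le A B))
      (isBoundedUnder_ge_card_inter_div_card _).isCoboundedUnder_le
      (isBoundedUnder_le_add (isBoundedUnder_le_card_inter_div_card A)
        (isBoundedUnder_le_card_inter_div_card B))).trans
    (limsup_add_le (isBoundedUnder_ge_card_inter_div_card A)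
      (isBoundedUnder_le_card_inter_div_card A)
      (isBoundedUnder_ge_card_inter_div_card B).isCoboundedUnder_le
      (isBoundedUnder_le_card_inter_div_card B))

lemma upperDensity_biUnion_le {ι : Type*} (t : Finset ι) (f : ι → Set α) :
    upperDensity I (⋃ i ∈ t, f i) ≤ ∑ i ∈ t, upperDensity I (f i) := by
  classical
  induction t using Finset.induction_on with
  | empty => simp [upperDensity]
  | insert a t ha ih =>
    rw [Finset.set_biUnion_insert, Finset.sum_insert ha]
    exact (upperDensity_union_le _ _).trans (add_le_add_right ih _)

lemma tendsto_upperDensity_biUnion_zero {ι β : Type*} {l : Filter β} (t : Finset ι)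
    {f : ι → β → Set α} (hf : ∀ i ∈ t, Tendsto (fun a => upperDensity I (f i a)) l (𝓝 0)) :
    Tendsto (fun a => upperDensity I (⋃ i ∈ t, f i a)) l (𝓝 0) := by
  have hsum := tendsto_finsetSum t hf
  rw [Finset.sum_const_zero] at hsum
  exact tendsto_of_tendsto_of_tendsto_of_le_of_le tendsto_const_nhds hsum
    (fun _ => upperDensity_nonneg _) (fun _ => upperDensity_biUnion_le t _)

variable {R : ℕ → Set α}

lemma unionGe_subset_unionGe {L₀ L : ℕ} (h : L₀ ≤ L) : unionGe R L ⊆ unionGe R L₀ := by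
  simp only [unionGe, Set.iUnion_subset_iff]
  exact fun i hi => Set.subset_biUnion_of_mem (u := R) (h.trans hi)

lemma unionGe_subset_diff_union_biUnion_inter {L₀ L : ℕ} (h : L₀ ≤ L) :
    unionGe R L ⊆ (unionGe R L₀ \ unionLt R L₀) ∪ ⋃ j ∈ Finset.range L₀, R j ∩ unionGe R L := by
  intro y hy
  by_cases hlt : y ∈ unionLt R L₀
  · obtain ⟨j, hj, hyj⟩ : ∃ j, j < L₀ ∧ y ∈ R j := by simpa [unionLt] using hlt
    exact Or.inr (Set.mem_iUnion₂.2 ⟨j, Finset.mem_range.2 hj, hyj, hy⟩)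
  · exact Or.inl ⟨unionGe_subset_unionGe h hy, hlt⟩

theorem WeakLightTailsFam.strongLightTailsFam (hweak : WeakLightTailsFam I R)
    (hinter : ∀ j, Tendsto (fun L => upperDensity I (R j ∩ unionGe R L)) atTop (𝓝 0)) :
    StrongLightTailsFam I R := by
  refine tendsto_order.2
    ⟨fun a ha => .of_forall fun L => ha.trans_le (upperDensity_nonneg _), fun ε hε => ?_⟩
  obtain ⟨L₀, hL₀⟩ := (hweak.eventually (gt_mem_nhds (half_pos hε))).exists
  have hhead := tendsto_upperDensity_biUnion_zero (Finset.range L₀) fun j _ => hinter j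
  filter_upwards [hhead.eventually (gt_mem_nhds (half_pos hε)), eventually_ge_atTop L₀]
    with L hL hL₀L
  calc upperDensity I (unionGe R L)
      ≤ upperDensity I
          ((unionGe R L₀ \ unionLt R L₀) ∪ ⋃ j ∈ Finset.range L₀, R j ∩ unionGe R L) :=
        upperDensity_mono (unionGe_subset_diff_union_biUnion_inter hL₀L)
    _ ≤ _ := upperDensity_union_le _ _
    _ < ε / 2 + ε / 2 := add_lt_add hL₀ hL
    _ = ε := add_halves ε

end LightTails

lemma Sieve.RSet_eq_biUnion (S : Sieve O) (j : ℕ) :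
    S.RSet j = ⋃ x ∈ S.gen j, (x + ·) '' (S.b j : Set O) := by
  rw [Sieve.RSet, ← Set.iUnion_add_left_image, Finset.set_biUnion_coe]

lemma Sieve.mem_RSet_of_mem_gen (S : Sieve O) {j : ℕ} {x : O} (hx : x ∈ S.gen j) :
    x ∈ S.RSet j :=
  ⟨x, hx, 0, (S.b j).zero_mem, add_zero x⟩

theorem strong_light_tails_of_class_condition_general
    {m : ℕ} (K : Fin m → Type) [∀ j, Field (K j)]
    [∀ j, NumberField (K j)]
    (S : Sieve (OK K)) (I : ℕ → Set (OK K))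
    (hWLT : S.HasWeakLightTails I)
    (hclass : ∀ j : ℕ, ∀ x ∈ S.RSet j,
      Tendsto (fun L => upperDensity I
          (((x + ·) '' (↑(S.b j) : Set (OK K))) ∩ unionGe S.RSet L)) atTop (𝓝 0)) :
    S.HasStrongLightTails I := by
  refine ⟨hWLT.1, hWLT.2.strongLightTailsFam fun j => ?_⟩
  simp_rw [S.RSet_eq_biUnion j, Set.iUnion₂_inter]
  exact tendsto_upperDensity_biUnion_zero _ fun x hx => hclass j x (S.mem_RSet_of_mem_gen hx)

/-- **From weak to strong light tails, via congruence classes.** If `R` is an Erdős sieve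
with weak light tails for `I`, and no congruence class `x + b_j` (with `x ∈ R_j`) has a
positive-upper-density part sieved out by the tails, then `R` has strong light tails. -/
theorem strong_light_tails_of_class_condition
    {m : ℕ} (hm : 0 < m) (K : Fin m → Type) [∀ j, Field (K j)]
    [∀ j, NumberField (K j)]
    (S : Sieve (OK K)) (I : ℕ → Set (OK K)) (hI : IsFolner I)
    (hWLT : S.HasWeakLightTails I)
    (hclass : ∀ j : ℕ, ∀ x ∈ S.RSet j,
      Tendsto (fun L => upperDensity I
          (((x + ·) '' (↑(S.b j) : Set (OK K))) ∩ unionGe S.RSet L)) atTop (𝓝 0)) :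
    S.HasStrongLightTails I :=
  strong_light_tails_of_class_condition_general K S I hWLT hclass

end ErdosSieve
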